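/- arXiv:2004.02469 — 2 statements merged into one kernel-verified Lean document; each statement's English description precedes it below -/
import Mathlib

section
/- (Feasibility part of Theorem 1.) Assume M > m* and T ≥ T*. For every ξ ∈ [0, T − T*], let u_ξ = M·1_{(ξ, ξ+T*)} on [0,T]. Then the associated state p_{u_ξ} satisfies p_{u_ξ}(T) = θ, and the total cost is ∫₀^T u_ξ(t) dt = M·T*. -/
/-!
Since `M > m*`, the field `f + M g` is positive on `[0, θ]`, so `G x = ∫₀ˣ dν / (f + M g)` is an
increasing bijection `[0, θ] → [0, T*]` whose inverse `ψ` solves `ψ' = f ψ + M g ψ`. As `0` and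
`θ` are equilibria of `f`, the state `ψ (t - ξ)`, frozen at `0` before `ξ` and at `θ` after
`ξ + T*`, is a trajectory of `u_ξ` ending at `θ`. Every other trajectory coincides with it: `f`
and `g` are Lipschitz near `[0, θ]`, and Grönwall's inequality, applied up to the first time the two
states are `δ` apart, shows that this time never comes.
-/

/-- A pair (u,p) is an admissible control/state pair on [0,T] with control bound M:
u is measurable with values in [0,M], and p is the (Carathéodory / absolutely
continuous) solution of p' = f(p) + u·g(p) a.e. on (0,T) with p(0) = 0, expressed
through the equivalent integral formulation. -/
def IsTrajectory (f g : ℝ → ℝ) (T M : ℝ) (u p : ℝ → ℝ) : Prop :=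
  Measurable u ∧ (∀ t, u t ∈ Set.Icc (0:ℝ) M) ∧
  ContinuousOn p (Set.Icc 0 T) ∧ p 0 = 0 ∧
  ∀ t ∈ Set.Icc (0:ℝ) T, p t = ∫ s in (0:ℝ)..t, (f (p s) + u s * g (p s))

open Set MeasureTheory Metric Topology intervalIntegral
open scoped NNReal

theorem continuousOn_primitive_Icc {k : ℝ → ℝ} {a b : ℝ} (hab : a ≤ b)
    (hk : ContinuousOn k (Icc a b)) : ContinuousOn (fun x => ∫ y in a..x, k y) (Icc a b) := by
  have := continuousOn_primitive_interval (f := k) (μ := volume) (a := a) (b := b)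
  rw [uIcc_of_le hab] at this
  exact this hk.integrableOn_Icc

theorem eq_zero_of_le_mul_integral {φ : ℝ → ℝ} {a b L : ℝ} (hφ : ContinuousOn φ (Icc a b))
    (hφ0 : ∀ t ∈ Icc a b, 0 ≤ φ t) (hle : ∀ t ∈ Icc a b, φ t ≤ L * ∫ s in a..t, φ s) :
    ∀ t ∈ Icc a b, φ t = 0 := by
  intro t ht
  have hab : a ≤ b := ht.1.trans ht.2
  have hΦ0 : ∀ x ∈ Icc a b, 0 ≤ ∫ s in a..x, φ s := fun x hx =>
    integral_nonneg hx.1 fun s hs => hφ0 s ⟨hs.1, hs.2.trans hx.2⟩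
  have hΦ : ∫ s in a..t, φ s = 0 := by
    refine eq_zero_of_abs_deriv_le_mul_abs_self_of_eq_zero_right
      (f := fun x => ∫ s in a..x, φ s) (f' := φ) (K := L) (b := b) ?_ ?_ integral_same ?_ t ht
    · exact continuousOn_primitive_Icc hab hφ
    · intro x hx
      have hnhds : Icc a b ∈ 𝓝[>] x := Icc_mem_nhdsGT_of_mem hx
      exact integral_hasDerivWithinAt_right
        (hφ.mono (uIcc_subset_Icc (left_mem_Icc.2 hab) (Ico_subset_Icc_self hx))).intervalIntegrable
        ((hφ.stronglyMeasurableAtFilter_nhdsWithin measurableSet_Icc x).filter_mono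
          (nhdsWithin_le_of_mem hnhds))
        ((hφ x (Ico_subset_Icc_self hx)).mono_of_mem_nhdsWithin hnhds)
    · intro x hx
      have hx' := Ico_subset_Icc_self hx
      rw [Real.norm_eq_abs, Real.norm_eq_abs, abs_of_nonneg (hφ0 x hx'), abs_of_nonneg (hΦ0 x hx')]
      exact hle x hx'
  exact le_antisymm (by simpa [hΦ] using hle t ht) (hφ0 t ht)

theorem strictMonoOn_primitive_of_pos {k : ℝ → ℝ} {a b : ℝ} (hk : ContinuousOn k (Icc a b))
    (hpos : ∀ x ∈ Icc a b, 0 < k x) : StrictMonoOn (fun x => ∫ y in a..x, k y) (Icc a b) := by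
  intro x hx y hy hxy
  have hint : ∀ z ∈ Icc a b, IntervalIntegrable k volume a z := fun z hz =>
    (hk.mono (uIcc_subset_Icc (left_mem_Icc.2 (hz.1.trans hz.2)) hz)).intervalIntegrable
  rw [← sub_pos, integral_interval_sub_left (hint y hy) (hint x hx)]
  exact intervalIntegral_pos_of_pos_on ((hint x hx).symm.trans (hint y hy))
    (fun z hz => hpos z ⟨hx.1.trans hz.1.le, hz.2.le.trans hy.2⟩) hxy

theorem StrictMonoOn.exists_continuous_rightInvOn_Icc {G : ℝ → ℝ} {a b : ℝ} (hab : a ≤ b)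
    (hG : StrictMonoOn G (Icc a b)) (hGc : ContinuousOn G (Icc a b)) :
    ∃ ψ : ℝ → ℝ, Continuous ψ ∧ (∀ τ, ψ τ ∈ Icc a b) ∧ (∀ τ ≤ G a, ψ τ = a) ∧
      (∀ τ, G b ≤ τ → ψ τ = b) ∧ ∀ τ ∈ Icc (G a) (G b), G (ψ τ) = τ := by
  have hGmaps : MapsTo G (Icc a b) (Icc (G a) (G b)) := fun x hx =>
    ⟨hG.monotoneOn (left_mem_Icc.2 hab) hx hx.1, hG.monotoneOn hx (right_mem_Icc.2 hab) hx.2⟩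
  have hGab : G a ≤ G b := hG.monotoneOn (left_mem_Icc.2 hab) (right_mem_Icc.2 hab) hab
  let e : Icc a b ≃o Icc (G a) (G b) := StrictMono.orderIsoOfSurjective hGmaps.restrict
    (fun x y hxy => hG x.2 y.2 hxy)
    (hGmaps.restrict_surjective_iff.2 (intermediate_value_Icc hab hGc))
  let ψ : ℝ → ℝ := IccExtend hGab fun τ => (e.symm τ : ℝ)
  have hψmem : ∀ τ, ψ τ ∈ Icc a b := fun τ => Subtype.prop _
  have hGψ : ∀ τ ∈ Icc (G a) (G b), G (ψ τ) = τ := fun τ hτ => by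
    simp only [ψ, IccExtend_of_mem _ _ hτ]
    exact congrArg Subtype.val (e.apply_symm_apply ⟨τ, hτ⟩)
  have hψ_eq : ∀ τ ∈ Icc (G a) (G b), ∀ x ∈ Icc a b, G x = τ → ψ τ = x := fun τ hτ x hx hGx =>
    hG.injOn (hψmem τ) hx ((hGψ τ hτ).trans hGx.symm)
  refine ⟨ψ, continuous_IccExtend_iff.2 (continuous_subtype_val.comp e.symm.continuous), hψmem,
    fun τ hτ => ?_, fun τ hτ => ?_, hGψ⟩
  · rw [show ψ τ = ψ (G a) by simp only [ψ, IccExtend_of_le_left _ _ hτ, IccExtend_left]]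
    exact hψ_eq _ (left_mem_Icc.2 hGab) a (left_mem_Icc.2 hab) rfl
  · rw [show ψ τ = ψ (G b) by simp only [ψ, IccExtend_of_right_le _ _ hτ, IccExtend_right]]
    exact hψ_eq _ (right_mem_Icc.2 hGab) b (right_mem_Icc.2 hab) rfl

theorem exists_solution_autonomous_of_pos {h : ℝ → ℝ} {a b : ℝ} (hab : a ≤ b)
    (hh : ContinuousOn h (Icc a b)) (hpos : ∀ x ∈ Icc a b, 0 < h x) :
    ∃ ψ : ℝ → ℝ, Continuous ψ ∧ (∀ τ, ψ τ ∈ Icc a b) ∧ (∀ τ ≤ 0, ψ τ = a) ∧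
      (∀ τ, (∫ x in a..b, (h x)⁻¹) ≤ τ → ψ τ = b) ∧
      ∀ τ ∈ Ioo 0 (∫ x in a..b, (h x)⁻¹), HasDerivAt ψ (h (ψ τ)) τ := by
  have hinv : ContinuousOn (fun x => (h x)⁻¹) (Icc a b) := hh.inv₀ fun x hx => (hpos x hx).ne'
  have hG := strictMonoOn_primitive_of_pos hinv fun x hx => inv_pos.2 (hpos x hx)
  obtain ⟨ψ, hψc, hψmem, hψa, hψb, hGψ⟩ :=
    hG.exists_continuous_rightInvOn_Icc hab (continuousOn_primitive_Icc hab hinv)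
  simp only [integral_same] at hψa hGψ
  refine ⟨ψ, hψc, hψmem, hψa, hψb, fun τ hτ => ?_⟩
  have hx : ψ τ ∈ Ioo a b := by
    refine ⟨(hψmem τ).1.lt_of_ne ?_, (hψmem τ).2.lt_of_ne ?_⟩ <;> intro hx <;>
      have hGτ := hGψ τ (Ioo_subset_Icc_self hτ)
    · rw [← hx, integral_same] at hGτ
      exact hτ.1.ne hGτ
    · rw [hx] at hGτ
      exact hτ.2.ne' hGτ
  have hGd : HasDerivAt (fun x => ∫ y in a..x, (h y)⁻¹) (h (ψ τ))⁻¹ (ψ τ) :=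
    integral_hasDerivAt_right
      ((hinv.mono (uIcc_subset_Icc (left_mem_Icc.2 hab) (hψmem τ))).intervalIntegrable)
      ((hinv.mono Ioo_subset_Icc_self).stronglyMeasurableAtFilter isOpen_Ioo _ hx)
      (hinv.continuousAt (Icc_mem_nhds hx.1 hx.2))
  have hψd := hGd.of_local_left_inverse hψc.continuousAt (inv_ne_zero (hpos _ (hψmem τ)).ne') <| by
    filter_upwards [Ioo_mem_nhds hτ.1 hτ.2] with y hy using hGψ y (Ioo_subset_Icc_self hy)
  rwa [inv_inv] at hψd

theorem integral_indicator_Ioo_const {ξ τ T M : ℝ} (hξ : 0 ≤ ξ) (hτ : 0 ≤ τ) (hT : ξ + τ ≤ T) :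
    ∫ t in 0..T, indicator (Ioo ξ (ξ + τ)) (fun _ => M) t = M * τ := by
  rw [integral_of_le (by linarith), setIntegral_indicator measurableSet_Ioo,
    inter_eq_self_of_subset_right (show Ioo ξ (ξ + τ) ⊆ Ioc 0 T from
      fun s hs => ⟨hξ.trans_lt hs.1, hs.2.le.trans hT⟩),
    setIntegral_const, Real.volume_real_Ioo_of_le (by linarith), add_sub_cancel_left, smul_eq_mul,
    mul_comm]

section Trajectory

variable {f g u p q : ℝ → ℝ} {S : Set ℝ} {T M : ℝ}

theorem intervalIntegrable_add_mul_comp {a b : ℝ} (hu : Measurable u) (huM : ∀ t, u t ∈ Icc 0 M)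
    (hf : ContinuousOn f S) (hg : ContinuousOn g S) (hp : ContinuousOn p (uIcc a b))
    (hpS : MapsTo p (uIcc a b) S) :
    IntervalIntegrable (fun s => f (p s) + u s * g (p s)) volume a b := by
  refine (hf.comp hp hpS).intervalIntegrable.add ?_
  have hgp := (hg.comp hp hpS).intervalIntegrable (μ := volume)
  rw [intervalIntegrable_iff] at hgp ⊢
  refine hgp.bdd_mul hu.aestronglyMeasurable (c := M) (ae_of_all _ fun t => ?_)
  rw [Real.norm_eq_abs, abs_of_nonneg (huM t).1]
  exact (huM t).2

theorem abs_add_mul_sub_le {Kf Kg : ℝ≥0} {c x y : ℝ} (hf : LipschitzOnWith Kf f S)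
    (hg : LipschitzOnWith Kg g S) (hc : c ∈ Icc 0 M) (hx : x ∈ S) (hy : y ∈ S) :
    |f x + c * g x - (f y + c * g y)| ≤ (Kf + M * Kg) * |x - y| := by
  have hfxy := hf.dist_le_mul x hx y hy
  have hgxy := hg.dist_le_mul x hx y hy
  rw [Real.dist_eq, Real.dist_eq] at hfxy hgxy
  calc |f x + c * g x - (f y + c * g y)| = |(f x - f y) + c * (g x - g y)| := by ring_nf
    _ ≤ |f x - f y| + c * |g x - g y| := by
      rw [← abs_of_nonneg hc.1, ← abs_mul, abs_of_nonneg hc.1]; exact abs_add_le _ _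
    _ ≤ Kf * |x - y| + M * (Kg * |x - y|) :=
      add_le_add hfxy (mul_le_mul hc.2 hgxy (abs_nonneg _) (hc.1.trans hc.2))
    _ = (Kf + M * Kg) * |x - y| := by ring

theorem IsTrajectory.eqOn_of_mapsTo {Kf Kg : ℝ≥0} {b : ℝ} (hp : IsTrajectory f g T M u p)
    (hq : IsTrajectory f g T M u q) (hf : LipschitzOnWith Kf f S) (hg : LipschitzOnWith Kg g S)
    (hbT : b ≤ T) (hpS : MapsTo p (Icc 0 b) S) (hqS : MapsTo q (Icc 0 b) S) :
    EqOn p q (Icc 0 b) := by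
  obtain ⟨hu, huM, hpc, -, hpI⟩ := hp
  obtain ⟨-, -, hqc, -, hqI⟩ := hq
  have hsub : Icc 0 b ⊆ Icc 0 T := Icc_subset_Icc_right hbT
  have hint : ∀ w : ℝ → ℝ, ContinuousOn w (Icc 0 T) → MapsTo w (Icc 0 b) S → ∀ t ∈ Icc 0 b,
      IntervalIntegrable (fun s => f (w s) + u s * g (w s)) volume 0 t := by
    intro w hw hwS t ht
    have htb : uIcc 0 t ⊆ Icc 0 b := uIcc_subset_Icc (left_mem_Icc.2 (ht.1.trans ht.2)) ht
    exact intervalIntegrable_add_mul_comp hu huM hf.continuousOn hg.continuousOn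
      (hw.mono (htb.trans hsub)) (hwS.mono_left htb)
  have hzero := eq_zero_of_le_mul_integral (φ := fun t => |p t - q t|) (L := Kf + M * Kg)
    ((hpc.mono hsub).sub (hqc.mono hsub)).abs (fun _ _ => abs_nonneg _) fun t ht => ?_
  · exact fun t ht => sub_eq_zero.1 (abs_eq_zero.1 (hzero t ht))
  have hIp := hint p hpc hpS t ht
  have hIq := hint q hqc hqS t ht
  have hcont : ContinuousOn (fun s => (Kf + M * Kg) * |p s - q s|) (uIcc 0 t) :=
    continuousOn_const.mul (((hpc.sub hqc).abs).mono
      ((uIcc_subset_Icc (left_mem_Icc.2 (ht.1.trans ht.2)) ht).trans hsub))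
  calc |p t - q t|
      = |∫ s in 0..t, (f (p s) + u s * g (p s) - (f (q s) + u s * g (q s)))| := by
        rw [hpI t (hsub ht), hqI t (hsub ht), integral_sub hIp hIq]
    _ ≤ ∫ s in 0..t, |f (p s) + u s * g (p s) - (f (q s) + u s * g (q s))| :=
        abs_integral_le_integral_abs ht.1
    _ ≤ ∫ s in 0..t, (Kf + M * Kg) * |p s - q s| :=
        integral_mono_on ht.1 (hIp.sub hIq).abs hcont.intervalIntegrable fun s hs =>
          abs_add_mul_sub_le hf hg (huM s) (hpS ⟨hs.1, hs.2.trans ht.2⟩)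
            (hqS ⟨hs.1, hs.2.trans ht.2⟩)
    _ = (Kf + M * Kg) * ∫ s in 0..t, |p s - q s| := integral_const_mul _ _

theorem IsTrajectory.eqOn_of_forall_lt {Kf Kg : ℝ≥0} {δ b : ℝ} (hp : IsTrajectory f g T M u p)
    (hq : IsTrajectory f g T M u q) (hf : LipschitzOnWith Kf f S) (hg : LipschitzOnWith Kg g S)
    (hqS : ∀ t ∈ Icc 0 T, closedBall (q t) δ ⊆ S) (hbT : b ≤ T)
    (hclose : ∀ t ∈ Ico 0 b, |p t - q t| < δ) :
    EqOn p q (Icc 0 b) := by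
  have hIco : EqOn p q (Ico 0 b) := by
    intro t ht
    have hsub : ∀ s ∈ Icc 0 t, s ∈ Ico 0 b ∧ s ∈ Icc 0 T := fun s hs =>
      ⟨⟨hs.1, hs.2.trans_lt ht.2⟩, ⟨hs.1, hs.2.trans (ht.2.le.trans hbT)⟩⟩
    refine hp.eqOn_of_mapsTo hq hf hg (ht.2.le.trans hbT) (fun s hs => ?_) (fun s hs => ?_)
      (right_mem_Icc.2 ht.1)
    · exact hqS s (hsub s hs).2 (mem_closedBall.2 (hclose s (hsub s hs).1).le)
    · exact hqS s (hsub s hs).2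
        (mem_closedBall_self ((abs_nonneg _).trans (hclose s (hsub s hs).1).le))
  rcases le_or_gt b 0 with hb | hb
  · intro t ht
    obtain rfl : t = 0 := le_antisymm (ht.2.trans hb) ht.1
    rw [hp.2.2.2.1, hq.2.2.2.1]
  · have hsub : Icc 0 b ⊆ Icc 0 T := Icc_subset_Icc_right hbT
    exact hIco.of_subset_closure (hp.2.2.1.mono hsub) (hq.2.2.1.mono hsub) Ico_subset_Icc_self
      (closure_Ico hb.ne).ge

theorem IsTrajectory.eqOn {Kf Kg : ℝ≥0} {δ : ℝ} (hp : IsTrajectory f g T M u p)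
    (hq : IsTrajectory f g T M u q) (hf : LipschitzOnWith Kf f S) (hg : LipschitzOnWith Kg g S)
    (hqS : ∀ t ∈ Icc 0 T, closedBall (q t) δ ⊆ S) (hδ : 0 < δ) :
    EqOn p q (Icc 0 T) := by
  refine hp.eqOn_of_forall_lt hq hf hg hqS le_rfl fun t ht => ?_
  by_contra! hfar
  set E := Icc 0 T ∩ (fun t => |p t - q t|) ⁻¹' Ici δ
  have hE : IsClosed E :=
    (hp.2.2.1.sub hq.2.2.1).abs.preimage_isClosed_of_isClosed isClosed_Icc isClosed_Ici
  have hbdd : BddBelow E := ⟨0, fun s hs => hs.1.1⟩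
  have hmem : sInf E ∈ E := hE.csInf_mem ⟨t, Ico_subset_Icc_self ht, hfar⟩ hbdd
  have heq := hp.eqOn_of_forall_lt hq hf hg hqS hmem.1.2
    (fun s hs => lt_of_not_ge fun h =>
      (csInf_le hbdd ⟨⟨hs.1, hs.2.le.trans hmem.1.2⟩, h⟩).not_gt hs.2)
    (right_mem_Icc.2 hmem.1.1)
  have hfirst : δ ≤ |p (sInf E) - q (sInf E)| := hmem.2
  rw [heq, sub_self, abs_zero] at hfirst
  exact hfirst.not_gt hδ

theorem isTrajectory_indicator_Ioo {ψ : ℝ → ℝ} {Tstar ξ θ : ℝ} (hM : 0 ≤ M) (hξ : 0 ≤ ξ)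
    (hψ : Continuous ψ) (hψmem : ∀ τ, ψ τ ∈ Icc 0 θ) (hψ0 : ∀ τ ≤ 0, ψ τ = 0)
    (hψθ : ∀ τ, Tstar ≤ τ → ψ τ = θ)
    (hψ' : ∀ τ ∈ Ioo 0 Tstar, HasDerivAt ψ (f (ψ τ) + M * g (ψ τ)) τ)
    (hf : ContinuousOn f (Icc 0 θ)) (hg : ContinuousOn g (Icc 0 θ)) (hf0 : f 0 = 0)
    (hfθ : f θ = 0) :
    IsTrajectory f g T M (indicator (Ioo ξ (ξ + Tstar)) fun _ => M) fun t => ψ (t - ξ) := by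
  set u := indicator (Ioo ξ (ξ + Tstar)) fun _ => M
  have hu : Measurable u := measurable_const.indicator measurableSet_Ioo
  have huM : ∀ t, u t ∈ Icc 0 M := fun t => by
    by_cases ht : t ∈ Ioo ξ (ξ + Tstar) <;> simp [u, ht, hM]
  have hq : Continuous fun t => ψ (t - ξ) := hψ.comp (continuous_sub_right ξ)
  refine ⟨hu, huM, hq.continuousOn, hψ0 _ (by linarith), fun t ht => ?_⟩
  have hderiv : ∀ s ∉ ({ξ, ξ + Tstar} : Set ℝ),
      HasDerivAt (fun t => ψ (t - ξ)) (f (ψ (s - ξ)) + u s * g (ψ (s - ξ))) s := by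
    intro s hs
    simp only [mem_insert_iff, mem_singleton_iff, not_or] at hs
    rcases lt_or_gt_of_ne hs.1 with hsξ | hξs
    · have hus : u s = 0 := indicator_of_notMem (fun h : s ∈ Ioo ξ (ξ + Tstar) => h.1.not_gt hsξ) _
      rw [hus, hψ0 _ (by linarith), hf0, zero_mul, add_zero]
      refine (hasDerivAt_const s (0 : ℝ)).congr_of_eventuallyEq ?_
      filter_upwards [Iio_mem_nhds hsξ] with y hy using hψ0 _ (by linarith [mem_Iio.1 hy])
    rcases lt_or_gt_of_ne hs.2 with hsT | hTs
    · have hus : u s = M := indicator_of_mem (show s ∈ Ioo ξ (ξ + Tstar) from ⟨hξs, hsT⟩) _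
      rw [hus]
      exact (hψ' _ ⟨by linarith, by linarith⟩).comp_sub_const s ξ
    · have hus : u s = 0 := indicator_of_notMem (fun h : s ∈ Ioo ξ (ξ + Tstar) => h.2.not_gt hTs) _
      rw [hus, hψθ _ (by linarith), hfθ, zero_mul, add_zero]
      refine (hasDerivAt_const s θ).congr_of_eventuallyEq ?_
      filter_upwards [Ioi_mem_nhds hTs] with y hy using hψθ _ (by linarith [mem_Ioi.1 hy])
  have hFTC := integral_eq_of_hasDerivAt_off_countable_of_le _ _ ht.1
    ((countable_singleton _).insert _) hq.continuousOn (fun s hs => hderiv s hs.2)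
    (intervalIntegrable_add_mul_comp hu huM hf hg hq.continuousOn fun s _ => hψmem _)
  rw [hFTC, hψ0 (0 - ξ) (by linarith), sub_zero]

end Trajectory

theorem add_mul_pos_of_mem_upperBounds {f g : ℝ → ℝ} {s : Set ℝ} {m M : ℝ}
    (hm : m ∈ upperBounds ((fun x => -f x / g x) '' s)) (hM : m < M) (hg : ∀ x ∈ s, 0 < g x) :
    ∀ x ∈ s, 0 < f x + M * g x := by
  intro x hx
  have := (div_lt_iff₀ (hg x hx)).1 ((hm ⟨x, hx, rfl⟩).trans_lt hM)
  linarith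

namespace Model

def denom (b1 b2 sh p : ℝ) : ℝ := b1 * (1 - p) * (1 - sh * p) + b2 * p

noncomputable def drift (b1 b2 d1 d2 sh p : ℝ) : ℝ :=
  p * (1 - p) * (d1 * b2 - d2 * b1 * (1 - sh * p)) / denom b1 b2 sh p

noncomputable def gain (b1 b2 K sh p : ℝ) : ℝ :=
  1 / K * (b1 * (1 - p) * (1 - sh * p)) / denom b1 b2 sh p

variable {b1 b2 d1 d2 K sh p : ℝ}

theorem mul_one_sub_mul_one_sub_pos (hb1 : 0 < b1) (hsh : sh ≤ 1) (hp0 : 0 ≤ p) (hp1 : p < 1) :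
    0 < b1 * (1 - p) * (1 - sh * p) := by
  have : sh * p ≤ p := mul_le_of_le_one_left hp0 hsh
  exact mul_pos (mul_pos hb1 (by linarith)) (by linarith)

theorem denom_pos (hb1 : 0 < b1) (hb2 : 0 ≤ b2) (hsh : sh ≤ 1) (hp0 : 0 ≤ p) (hp1 : p < 1) :
    0 < denom b1 b2 sh p :=
  add_pos_of_pos_of_nonneg (mul_one_sub_mul_one_sub_pos hb1 hsh hp0 hp1) (mul_nonneg hb2 hp0)

theorem gain_pos (hK : 0 < K) (hb1 : 0 < b1) (hb2 : 0 ≤ b2) (hsh : sh ≤ 1) (hp0 : 0 ≤ p)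
    (hp1 : p < 1) : 0 < gain b1 b2 K sh p :=
  div_pos (mul_pos (one_div_pos.2 hK) (mul_one_sub_mul_one_sub_pos hb1 hsh hp0 hp1))
    (denom_pos hb1 hb2 hsh hp0 hp1)

@[simp]
theorem drift_zero : drift b1 b2 d1 d2 sh 0 = 0 := by
  simp [drift]

theorem drift_eq_zero (hb1 : b1 ≠ 0) (hd2 : d2 ≠ 0) (hsh : sh ≠ 0) :
    drift b1 b2 d1 d2 sh (1 / sh * (1 - d1 * b2 / (d2 * b1))) = 0 := by
  have : d1 * b2 - d2 * b1 * (1 - sh * (1 / sh * (1 - d1 * b2 / (d2 * b1)))) = 0 := by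
    field_simp
    ring
  rw [drift, this, mul_zero, zero_div]

theorem exists_lipschitzOnWith_cthickening {θ : ℝ} (hb1 : 0 < b1) (hb2 : 0 ≤ b2) (hsh : sh ≤ 1)
    (hθ : θ < 1) :
    ∃ δ > 0, ∃ Kf Kg : ℝ≥0, LipschitzOnWith Kf (drift b1 b2 d1 d2 sh) (cthickening δ (Icc 0 θ)) ∧
      LipschitzOnWith Kg (gain b1 b2 K sh) (cthickening δ (Icc 0 θ)) := by
  have hD : ContDiff ℝ 1 (denom b1 b2 sh) := by unfold denom; fun_prop
  obtain ⟨δ, hδ, hsub⟩ := isCompact_Icc.exists_cthickening_subset_open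
    (isOpen_ne_fun hD.continuous continuous_const) fun x hx =>
      (denom_pos hb1 hb2 hsh hx.1 (hx.2.trans_lt hθ)).ne'
  have hlip : ∀ N : ℝ → ℝ, ContDiff ℝ 1 N →
      ∃ L : ℝ≥0, LipschitzOnWith L (fun x => N x / denom b1 b2 sh x) (cthickening δ (Icc 0 θ)) :=
    fun N hN => (hN.contDiffOn.div hD.contDiffOn hsub).exists_lipschitzOnWith one_ne_zero
      ((convex_Icc 0 θ).cthickening δ) isCompact_Icc.cthickening
  obtain ⟨Kf, hKf⟩ := hlip _ (by fun_prop : ContDiff ℝ 1 fun p =>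
    p * (1 - p) * (d1 * b2 - d2 * b1 * (1 - sh * p)))
  obtain ⟨Kg, hKg⟩ := hlip _ (by fun_prop : ContDiff ℝ 1 fun p =>
    1 / K * (b1 * (1 - p) * (1 - sh * p)))
  exact ⟨δ, hδ, Kf, Kg, hKf, hKg⟩

end Model

theorem stmt_10_general
    (b1 b2 d1 d2 K sh : ℝ)
    (hb1 : 0 < b1) (hb2 : 0 < b2) (hd2 : 0 < d2)
    (hK : 0 < K) (hsh0 : 0 < sh) (hsh1 : sh ≤ 1)
    (hlow : 1 - sh < d1 * b2 / (d2 * b1)) (hhigh : d1 * b2 / (d2 * b1) < 1)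
    (f g : ℝ → ℝ)
    (hf : ∀ p, f p = p * (1 - p) * (d1 * b2 - d2 * b1 * (1 - sh * p)) /
      (b1 * (1 - p) * (1 - sh * p) + b2 * p))
    (hg : ∀ p, g p = (1 / K) * (b1 * (1 - p) * (1 - sh * p)) /
      (b1 * (1 - p) * (1 - sh * p) + b2 * p))
    (θ : ℝ) (hθ : θ = (1 / sh) * (1 - d1 * b2 / (d2 * b1)))
    (mstar : ℝ)
    (hmstar : IsGreatest ((fun p => -f p / g p) '' Set.Icc 0 θ) mstar)
    (M : ℝ) (hM : mstar < M)
    (Tstar : ℝ) (hTstar : Tstar = ∫ ν in (0:ℝ)..θ, (f ν + M * g ν)⁻¹)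
    (T : ℝ) (hT : Tstar ≤ T)
    (ξ : ℝ) (hξ : ξ ∈ Set.Icc (0:ℝ) (T - Tstar))
    (u : ℝ → ℝ) (hu : u = Set.indicator (Set.Ioo ξ (ξ + Tstar)) fun _ => M) :
    (∀ p : ℝ → ℝ, IsTrajectory f g T M u p → p T = θ) ∧
    (∫ t in (0:ℝ)..T, u t) = M * Tstar := by
  obtain rfl : f = Model.drift b1 b2 d1 d2 sh := funext hf
  obtain rfl : g = Model.gain b1 b2 K sh := funext hg
  obtain ⟨hθ0, hθ1⟩ : 0 < θ ∧ θ < 1 := by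
    rw [hθ, one_div_mul_eq_div, div_lt_one hsh0]
    exact ⟨div_pos (by linarith) hsh0, by linarith⟩
  obtain ⟨δ, hδ, Kf, Kg, hLf, hLg⟩ :=
    Model.exists_lipschitzOnWith_cthickening (d1 := d1) (d2 := d2) (K := K) hb1 hb2.le hsh1 hθ1
  have hfc := hLf.continuousOn.mono (self_subset_cthickening _)
  have hgc := hLg.continuousOn.mono (self_subset_cthickening _)
  have hpos := add_mul_pos_of_mem_upperBounds hmstar.2 hM fun x hx =>
    Model.gain_pos hK hb1 hb2.le hsh1 hx.1 (hx.2.trans_lt hθ1)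
  have hM0 : 0 ≤ M := ((hmstar.2 ⟨0, left_mem_Icc.2 hθ0.le, by simp⟩).trans_lt hM).le
  obtain ⟨ψ, hψc, hψmem, hψ0, hψθ, hψ'⟩ :=
    exists_solution_autonomous_of_pos (h := fun x => Model.drift b1 b2 d1 d2 sh x +
      M * Model.gain b1 b2 K sh x) hθ0.le (hfc.add (continuousOn_const.mul hgc)) hpos
  rw [← hTstar] at hψθ hψ'
  have hTstar0 : 0 ≤ Tstar :=
    hTstar ▸ integral_nonneg hθ0.le fun x hx => (inv_pos.2 (hpos x hx)).le
  have hq := isTrajectory_indicator_Ioo (T := T) hM0 hξ.1 hψc hψmem hψ0 hψθ hψ' hfc hgc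
    Model.drift_zero (hθ ▸ Model.drift_eq_zero hb1.ne' hd2.ne' hsh0.ne')
  subst hu
  refine ⟨fun p hp => ?_, integral_indicator_Ioo_const hξ.1 hTstar0 (by linarith [hξ.2])⟩
  rw [hp.eqOn hq hLf hLg (fun t _ => closedBall_subset_cthickening (hψmem _) δ) hδ
    ⟨hTstar0.trans hT, le_rfl⟩]
  exact hψθ _ (by linarith [hξ.2])

/-- feasibility part of Theorem 1: for M > m*, T ≥ T* and any
ξ ∈ [0, T-T*], the control u_ξ = M·1_{(ξ,ξ+T*)} steers the state to θ at time T,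
and its total cost is ∫₀^T u_ξ = M·T*. -/
theorem stmt_10
    (b1 b2 d1 d2 K sh : ℝ)
    (hb1 : 0 < b1) (hb2 : 0 < b2) (hd1 : 0 < d1) (hd2 : 0 < d2)
    (hK : 0 < K) (hsh0 : 0 < sh) (hsh1 : sh ≤ 1)
    (hlow : 1 - sh < d1 * b2 / (d2 * b1)) (hhigh : d1 * b2 / (d2 * b1) < 1)
    (f g : ℝ → ℝ)
    (hf : ∀ p, f p = p * (1 - p) * (d1 * b2 - d2 * b1 * (1 - sh * p)) /
      (b1 * (1 - p) * (1 - sh * p) + b2 * p))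
    (hg : ∀ p, g p = (1 / K) * (b1 * (1 - p) * (1 - sh * p)) /
      (b1 * (1 - p) * (1 - sh * p) + b2 * p))
    (θ : ℝ) (hθ : θ = (1 / sh) * (1 - d1 * b2 / (d2 * b1)))
    (mstar : ℝ)
    (hmstar : IsGreatest ((fun p => -f p / g p) '' Set.Icc 0 θ) mstar)
    (M : ℝ) (hM : mstar < M)
    (Tstar : ℝ) (hTstar : Tstar = ∫ ν in (0:ℝ)..θ, (f ν + M * g ν)⁻¹)
    (T : ℝ) (hT : Tstar ≤ T)
    (ξ : ℝ) (hξ : ξ ∈ Set.Icc (0:ℝ) (T - Tstar))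
    (u : ℝ → ℝ) (hu : u = Set.indicator (Set.Ioo ξ (ξ + Tstar)) fun _ => M) :
    (∀ p : ℝ → ℝ, IsTrajectory f g T M u p → p T = θ) ∧
    (∫ t in (0:ℝ)..T, u t) = M * Tstar :=
  stmt_10_general b1 b2 d1 d2 K sh hb1 hb2 hd2 hK hsh0 hsh1 hlow hhigh f g hf hg θ hθ mstar hmstar M
    hM Tstar hTstar T hT ξ hξ u hu
end

section
/- (Existence for the fixed-horizon problem.) Assume M > m* and T ≥ T*. The set of measurable controls u : [0,T] → [0,M] whose associated state satisfies p_u(T) ≥ θ is nonempty, and the infimum of ∫₀^T u(t) dt over this set is attained by some admissible control. -/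
open MeasureTheory Set Filter Topology

/-! The bang-bang control, `u = M` until time `T*` and `u = 0` afterwards, is optimal. Under full
control the state solves the autonomous equation `p' = G(p)` with `G = f + M g > 0` on `[0, θ]`
(this is what `M > m*` means), so by separation of variables it reaches `θ` exactly at
`T* = ∫₀^θ dν / G(ν)`; it then stays at `θ` because `f(θ) = 0`, and the cost is `M T*`.

Conversely, because `f ≤ 0` on `[0, θ]`, any admissible pair `(v, q)` satisfies
`M q' / G(q) ≤ v` whenever `q ∈ [0, θ]`. Integrating this over the last passage of `q` from `0`
to `θ` and changing variables (`q` is absolutely continuous) gives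
`∫ v ≥ M ∫₀^θ dν / G(ν) = M T*`. -/

theorem LipschitzOnWith.comp_absolutelyContinuousOnInterval {X : Type*} [PseudoMetricSpace X]
    {Φ : ℝ → X} {F : ℝ → ℝ} {K : NNReal} {s : Set ℝ} {a b : ℝ}
    (hΦ : LipschitzOnWith K Φ s) (hF : AbsolutelyContinuousOnInterval F a b)
    (hFs : MapsTo F (uIcc a b) s) : AbsolutelyContinuousOnInterval (Φ ∘ F) a b := by
  unfold AbsolutelyContinuousOnInterval at hF ⊢
  have hlim := hF.const_mul (K : ℝ)
  rw [mul_zero] at hlim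
  refine squeeze_zero' (Eventually.of_forall fun E ↦ Finset.sum_nonneg fun _ _ ↦ dist_nonneg)
    ?_ hlim
  filter_upwards [eventually_inf_principal.mpr (Eventually.of_forall fun E hE ↦ hE)]
    with E hE
  rw [Finset.mul_sum]
  exact Finset.sum_le_sum fun i hi ↦ hΦ.dist_le_mul _ (hFs (hE.1 i hi).1) _ (hFs (hE.1 i hi).2)

theorem AbsolutelyContinuousOnInterval.integral_comp_mul_deriv {F h : ℝ → ℝ} {a b : ℝ}
    (hF : AbsolutelyContinuousOnInterval F a b) (hh : Continuous h) :
    ∫ s in a..b, h (F s) * deriv F s = ∫ x in F a..F b, h x := by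
  set Φ : ℝ → ℝ := fun x ↦ ∫ y in (0 : ℝ)..x, h y
  have hΦ : ∀ x, HasDerivAt Φ (h x) x := fun x ↦
    intervalIntegral.integral_hasDerivAt_right (hh.intervalIntegrable _ _)
      (hh.stronglyMeasurableAtFilter _ _) hh.continuousAt
  have hΦC1 : ContDiff ℝ 1 Φ := contDiff_one_iff_deriv.mpr
    ⟨fun x ↦ (hΦ x).differentiableAt, (funext fun x ↦ (hΦ x).deriv) ▸ hh⟩
  obtain ⟨R, hR⟩ :=
    (isCompact_uIcc.image_of_continuousOn hF.continuousOn).isBounded.subset_closedBall 0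
  obtain ⟨K, hK⟩ := hΦC1.contDiffOn.exists_lipschitzOnWith one_ne_zero
    (convex_closedBall 0 R) (isCompact_closedBall 0 R)
  have hΦF := hK.comp_absolutelyContinuousOnInterval hF fun x hx ↦ hR (mem_image_of_mem F hx)
  calc ∫ s in a..b, h (F s) * deriv F s = ∫ s in a..b, deriv (Φ ∘ F) s := by
        refine intervalIntegral.integral_congr_ae ?_
        filter_upwards [hF.ae_differentiableAt] with s hs hsab
        exact ((hΦ (F s)).comp s (hs (uIoc_subset_uIcc hsab)).hasDerivAt).deriv.symm
    _ = Φ (F b) - Φ (F a) := hΦF.integral_deriv_eq_sub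
    _ = ∫ x in F a..F b, h x :=
        intervalIntegral.integral_interval_sub_left (hh.intervalIntegrable _ _)
          (hh.intervalIntegrable _ _)

theorem ContinuousOn.exists_Ioo_mapsTo_Ioo {q : ℝ → ℝ} {a b α β : ℝ} (hab : a ≤ b)
    (hq : ContinuousOn q (Icc a b)) (ha : q a ≤ α) (hb : β ≤ q b) :
    ∃ t₀ t₁, a ≤ t₀ ∧ t₀ ≤ t₁ ∧ t₁ ≤ b ∧ q t₀ ≤ α ∧ β ≤ q t₁ ∧
      MapsTo q (Ioo t₀ t₁) (Ioo α β) := by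
  set S := Icc a b ∩ q ⁻¹' Ici β
  have hS : sInf S ∈ S :=
    (hq.preimage_isClosed_of_isClosed isClosed_Icc isClosed_Ici).csInf_mem
    ⟨b, right_mem_Icc.mpr hab, hb⟩ ⟨a, fun t ht ↦ ht.1.1⟩
  set t₁ := sInf S
  set S' := Icc a t₁ ∩ q ⁻¹' Iic α
  have hS' : sSup S' ∈ S' :=
    ((hq.mono (Icc_subset_Icc_right hS.1.2)).preimage_isClosed_of_isClosed isClosed_Icc
      isClosed_Iic).csSup_mem ⟨a, left_mem_Icc.mpr hS.1.1, ha⟩ ⟨t₁, fun t ht ↦ ht.1.2⟩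
  refine ⟨sSup S', t₁, hS'.1.1, hS'.1.2, hS.1.2, hS'.2, hS.2, fun s hs ↦ ⟨?_, ?_⟩⟩
  · by_contra! hsα
    exact hs.1.not_ge
      (le_csSup ⟨t₁, fun t ht ↦ ht.1.2⟩ ⟨⟨hS'.1.1.trans hs.1.le, hs.2.le⟩, hsα⟩)
  · by_contra! hsβ
    exact hs.2.not_ge (csInf_le ⟨a, fun t ht ↦ ht.1.1⟩
      ⟨⟨hS'.1.1.trans hs.1.le, hs.2.le.trans hS.1.2⟩, hsβ⟩)

theorem exists_hasDerivAt_comp_of_pos_of_le {G : ℝ → ℝ} {B : ℝ} (hG : Continuous G)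
    (hpos : ∀ x, 0 < G x) (hB : ∀ x, G x ≤ B) :
    ∃ P : ℝ → ℝ, Monotone P ∧ Continuous P ∧ (∀ t, HasDerivAt P (G (P t)) t) ∧
      ∀ x, P (∫ y in (0 : ℝ)..x, (G y)⁻¹) = x := by
  set τ : ℝ → ℝ := fun x ↦ ∫ y in (0 : ℝ)..x, (G y)⁻¹
  have hGinv : Continuous fun y ↦ (G y)⁻¹ := hG.inv₀ fun y ↦ (hpos y).ne'
  have hτ : ∀ x, HasDerivAt τ (G x)⁻¹ x := fun x ↦
    intervalIntegral.integral_hasDerivAt_right (hGinv.intervalIntegrable _ _)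
      (hGinv.stronglyMeasurableAtFilter _ _) hGinv.continuousAt
  have hτmono : StrictMono τ :=
    strictMono_of_deriv_pos fun x ↦ (hτ x).deriv ▸ inv_pos.mpr (hpos x)
  have hinv : ∀ y, B⁻¹ ≤ (G y)⁻¹ := fun y ↦ inv_anti₀ (hpos y) (hB y)
  have hτ_ge : ∀ x, 0 ≤ x → x * B⁻¹ ≤ τ x := fun x hx ↦ by
    simpa using intervalIntegral.integral_mono_on (μ := volume) hx intervalIntegrable_const
      (hGinv.intervalIntegrable 0 x) fun y _ ↦ hinv y
  have hτ_le : ∀ x, x ≤ 0 → τ x ≤ x * B⁻¹ := fun x hx ↦ by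
    have := intervalIntegral.integral_mono_on (μ := volume) hx intervalIntegrable_const
      (hGinv.intervalIntegrable x 0) fun y _ ↦ hinv y
    simp only [intervalIntegral.integral_const, smul_eq_mul, zero_sub] at this
    simp only [τ, intervalIntegral.integral_symm x 0]
    linarith
  have hB0 : 0 < B⁻¹ := inv_pos.mpr ((hpos 0).trans_le (hB 0))
  have hsurj : Function.Surjective τ :=
    (continuous_iff_continuousAt.mpr fun x ↦ (hτ x).continuousAt).surjective
      (tendsto_atTop_mono' _ (eventually_ge_atTop 0 |>.mono hτ_ge)
        (tendsto_id.atTop_mul_const hB0))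
      (tendsto_atBot_mono' _ (eventually_le_atBot 0 |>.mono hτ_le)
        (tendsto_id.atBot_mul_const hB0))
  set e := hτmono.orderIsoOfSurjective τ hsurj
  refine ⟨e.symm, e.symm.monotone, e.symm.continuous, fun t ↦ ?_, e.symm_apply_apply⟩
  simpa using (hτ (e.symm t)).of_local_left_inverse e.symm.continuous.continuousAt
    (inv_ne_zero (hpos _).ne') (Eventually.of_forall e.apply_symm_apply)

theorem integral_ite_lt_eq_sub_min {φ φ' : ℝ → ℝ} {a b c : ℝ} (hab : a ≤ b)
    (hφ : ∀ t, HasDerivAt φ (φ' t) t) (hφ' : Continuous φ') :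
    ∫ s in a..b, (if s < c then φ' s else 0) = φ (min b c) - φ (min a c) := by
  have hφc : Continuous φ := continuous_iff_continuousAt.mpr fun t ↦ (hφ t).continuousAt
  refine intervalIntegral.integral_eq_sub_of_hasDeriv_right_of_le (f := fun t ↦ φ (min t c)) hab
    (hφc.comp (continuous_id.min continuous_const)).continuousOn (fun t _ ↦ ?_) ?_
  · split_ifs with htc
    · refine ((hφ t).congr_of_eventuallyEq ?_).hasDerivWithinAt
      filter_upwards [eventually_lt_nhds htc] with s hs using by rw [min_eq_left hs.le]
    · refine (hasDerivWithinAt_const t _ (φ c)).congr (fun s hs ↦ ?_) ?_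
      · rw [min_eq_right ((not_lt.mp htc).trans (le_of_lt hs))]
      · rw [min_eq_right (not_lt.mp htc)]
  · refine (hφ'.intervalIntegrable a b).mono_fun
      ((Measurable.ite measurableSet_Iio hφ'.measurable measurable_const).aestronglyMeasurable)
      (Eventually.of_forall fun s ↦ ?_)
    dsimp only
    split_ifs <;> simp

theorem ContinuousOn.exists_continuous_pos_le_eqOn {G : ℝ → ℝ} {a b : ℝ} (hab : a ≤ b)
    (hG : ContinuousOn G (Icc a b)) (hpos : ∀ x ∈ Icc a b, 0 < G x) :
    ∃ Ĝ : ℝ → ℝ, Continuous Ĝ ∧ (∀ x, 0 < Ĝ x) ∧ (∃ B, ∀ x, Ĝ x ≤ B) ∧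
      EqOn Ĝ G (Icc a b) := by
  obtain ⟨x₀, -, hx₀⟩ := isCompact_Icc.exists_isMaxOn (nonempty_Icc.mpr hab) hG
  refine ⟨fun x ↦ G (projIcc a b hab x),
    hG.comp_continuous (continuous_subtype_val.comp continuous_projIcc)
      fun x ↦ (projIcc a b hab x).2,
    fun x ↦ hpos _ (projIcc a b hab x).2, ⟨G x₀, fun x ↦ hx₀ (projIcc a b hab x).2⟩,
    fun x hx ↦ by simp only [projIcc_of_mem hab hx]⟩

theorem mul_inv_mul_le_of_nonpos {a b M v : ℝ} (ha : a ≤ 0) (hab : 0 < a + M * b)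
    (hv : v ∈ Icc 0 M) : M * (a + M * b)⁻¹ * (a + v * b) ≤ v := by
  rw [mul_assoc, mul_comm _ (a + v * b), ← div_eq_mul_inv, mul_div_assoc', div_le_iff₀ hab]
  nlinarith [hv.1, hv.2]

theorem exists_bangBang_isTrajectory {f g : ℝ → ℝ} {T M θ : ℝ} (hθ : 0 ≤ θ)
    (hf : ContinuousOn f (Icc 0 θ)) (hg : ContinuousOn g (Icc 0 θ)) (hfθ : f θ = 0)
    (hG : ∀ x ∈ Icc 0 θ, 0 < f x + M * g x) (hM : 0 ≤ M)
    (hT : ∫ x in (0 : ℝ)..θ, (f x + M * g x)⁻¹ ≤ T) :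
    ∃ u p, IsTrajectory f g T M u p ∧ θ ≤ p T ∧
      ∫ t in (0 : ℝ)..T, u t = M * ∫ x in (0 : ℝ)..θ, (f x + M * g x)⁻¹ := by
  have hGc : ContinuousOn (fun x ↦ f x + M * g x) (Icc 0 θ) :=
    hf.add (continuousOn_const.mul hg)
  obtain ⟨Ĝ, hĜc, hĜpos, ⟨B, hB⟩, hĜ⟩ := hGc.exists_continuous_pos_le_eqOn hθ hG
  obtain ⟨P, hPmono, hPc, hP, hPτ⟩ := exists_hasDerivAt_comp_of_pos_of_le hĜc hĜpos hB
  set Tstar := ∫ x in (0 : ℝ)..θ, (f x + M * g x)⁻¹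
  have hPθ : P Tstar = θ := by
    convert hPτ θ using 2
    exact intervalIntegral.integral_congr fun x hx ↦ by
      rw [hĜ (uIcc_of_le hθ ▸ hx)]
  have hP0 : P 0 = 0 := by simpa using hPτ 0
  have hT0 : 0 ≤ Tstar :=
    intervalIntegral.integral_nonneg hθ fun x hx ↦ (inv_pos.2 (hG x hx)).le
  set u : ℝ → ℝ := fun t ↦ if t < Tstar then M else 0
  set p : ℝ → ℝ := fun t ↦ P (min t Tstar)
  have hp : ∀ s, 0 ≤ s → p s ∈ Icc 0 θ := fun s hs ↦
    ⟨hP0 ▸ hPmono (le_min hs hT0), hPθ ▸ hPmono (min_le_right _ _)⟩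
  have hrate : ∀ s, 0 ≤ s → f (p s) + u s * g (p s) = if s < Tstar then Ĝ (P s) else 0 := by
    intro s hs
    by_cases hsT : s < Tstar
    · have hps : p s = P s := by simp only [p, min_eq_left hsT.le]
      simp only [u, if_pos hsT, ← hps]
      exact (hĜ (hp s hs)).symm
    · simp [p, u, hsT, min_eq_right (not_lt.1 hsT), hPθ, hfθ]
  have hcost := integral_ite_lt_eq_sub_min (φ := fun t ↦ M * t) (φ' := fun _ ↦ M) (c := Tstar)
    (hT0.trans hT) (fun t ↦ by simpa using (hasDerivAt_id t).const_mul M) continuous_const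
  refine ⟨u, p, ⟨Measurable.ite measurableSet_Iio measurable_const measurable_const,
    fun t ↦ ?_, (hPc.comp (continuous_id.min continuous_const)).continuousOn,
    by simp only [p, min_eq_left hT0, hP0], fun t ht ↦ ?_⟩, ?_, ?_⟩
  · by_cases htT : t < Tstar <;> simp [u, htT, hM]
  · rw [intervalIntegral.integral_congr fun s hs ↦ hrate s (uIcc_of_le ht.1 ▸ hs).1,
      integral_ite_lt_eq_sub_min (φ' := fun s ↦ Ĝ (P s)) ht.1 hP (hĜc.comp hPc),
      min_eq_left hT0, hP0, sub_zero]
  · simp only [p, min_eq_right hT, hPθ, le_refl]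
  · simpa [min_eq_right hT, min_eq_left hT0] using hcost

theorem IsTrajectory.mul_integral_inv_le_integral {f g : ℝ → ℝ} {T M θ : ℝ} {v q : ℝ → ℝ}
    (hvq : IsTrajectory f g T M v q) (hT : 0 ≤ T) (hqT : θ ≤ q T) (hθ : 0 < θ)
    (hf : ContinuousOn f (Icc 0 θ)) (hg : ContinuousOn g (Icc 0 θ))
    (hf0 : ∀ x ∈ Icc 0 θ, f x ≤ 0) (hG : ∀ x ∈ Icc 0 θ, 0 < f x + M * g x) :
    M * ∫ x in (0 : ℝ)..θ, (f x + M * g x)⁻¹ ≤ ∫ t in (0 : ℝ)..T, v t := by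
  obtain ⟨hvm, hv, hqc, hq0, hq⟩ := hvq
  have hM : 0 ≤ M := (hv 0).1.trans (hv 0).2
  have hGc : ContinuousOn (fun x ↦ f x + M * g x) (Icc 0 θ) :=
    hf.add (continuousOn_const.mul hg)
  obtain ⟨Ĝ, hĜc, hĜpos, -, hĜ⟩ := hGc.exists_continuous_pos_le_eqOn hθ.le hG
  set w : ℝ → ℝ := fun s ↦ f (q s) + v s * g (q s)
  have hw : IntervalIntegrable w volume 0 T := by
    by_contra hw
    have := hq T ⟨hT, le_rfl⟩
    rw [intervalIntegral.integral_undef hw] at this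
    linarith
  set F : ℝ → ℝ := fun t ↦ ∫ s in (0 : ℝ)..t, w s
  have hqF : EqOn q F (Icc 0 T) := hq
  have hv_int : IntervalIntegrable v volume 0 T :=
    (intervalIntegrable_const (c := M)).mono_fun hvm.aestronglyMeasurable
      (ae_of_all _ fun s ↦ by simpa [abs_of_nonneg (hv s).1, abs_of_nonneg hM] using (hv s).2)
  obtain ⟨t₀, t₁, h0t₀, ht₀₁, ht₁T, hqt₀, hqt₁, hq_mem⟩ :=
    hqc.exists_Ioo_mapsTo_Ioo hT hq0.le hqT
  have hsub : Icc t₀ t₁ ⊆ Icc 0 T := Icc_subset_Icc h0t₀ ht₁T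
  have hF : AbsolutelyContinuousOnInterval F t₀ t₁ :=
    (hw.absolutelyContinuousOnInterval_intervalIntegral left_mem_uIcc).mono
      (by rwa [uIcc_of_le ht₀₁, uIcc_of_le hT])
  have hF' : ∀ᵐ s, s ∈ Icc 0 T → deriv F s = w s := by
    filter_upwards [hw.ae_hasDerivAt_integral] with s hs hsT
    exact (hs (uIcc_of_le hT ▸ hsT) 0 left_mem_uIcc).deriv
  set h : ℝ → ℝ := fun x ↦ M * (Ĝ x)⁻¹
  have hh : Continuous h := continuous_const.mul (hĜc.inv₀ fun x ↦ (hĜpos x).ne')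
  have hh0 : ∀ x, 0 ≤ h x := fun x ↦ mul_nonneg hM (inv_pos.2 (hĜpos x)).le
  calc M * ∫ x in (0 : ℝ)..θ, (f x + M * g x)⁻¹ = ∫ x in (0 : ℝ)..θ, h x := by
        rw [← intervalIntegral.integral_const_mul]
        exact intervalIntegral.integral_congr fun x hx ↦ by
          simp only [h, hĜ (uIcc_of_le hθ.le ▸ hx)]
    _ ≤ ∫ x in F t₀..F t₁, h x := by
        rw [← hqF (hsub (left_mem_Icc.2 ht₀₁)), ← hqF (hsub (right_mem_Icc.2 ht₀₁))]
        exact intervalIntegral.integral_mono_interval hqt₀ hθ.le hqt₁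
          (ae_of_all _ fun x ↦ hh0 x) (hh.intervalIntegrable _ _)
    _ = ∫ s in t₀..t₁, h (F s) * deriv F s := (hF.integral_comp_mul_deriv hh).symm
    _ ≤ ∫ s in t₀..t₁, v s := by
        refine intervalIntegral.integral_mono_ae_restrict ht₀₁
          (hF.intervalIntegrable_deriv.continuousOn_mul (hh.comp_continuousOn hF.continuousOn))
          (hv_int.mono_set (by rwa [uIcc_of_le ht₀₁, uIcc_of_le hT]))
          ((ae_restrict_iff' measurableSet_Icc).2 ?_)
        filter_upwards [hF', Measure.ae_ne volume t₀, Measure.ae_ne volume t₁]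
          with s hs hst₀ hst₁ hst
        have hqs := hq_mem ⟨hst.1.lt_of_ne hst₀.symm, hst.2.lt_of_ne hst₁⟩
        rw [hs (hsub hst), ← hqF (hsub hst)]
        simpa only [h, hĜ (Ioo_subset_Icc_self hqs)] using
          mul_inv_mul_le_of_nonpos (hf0 _ (Ioo_subset_Icc_self hqs))
            (hG _ (Ioo_subset_Icc_self hqs)) (hv s)
    _ ≤ ∫ t in (0 : ℝ)..T, v t := intervalIntegral.integral_mono_interval h0t₀ ht₀₁ ht₁T
        (ae_of_all _ fun s ↦ (hv s).1) hv_int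

theorem one_div_mul_one_sub_mem_Ioo {s r : ℝ} (hs : 0 < s) (hlow : 1 - s < r) (hhigh : r < 1) :
    1 / s * (1 - r) ∈ Ioo 0 1 := by
  refine ⟨by positivity, ?_⟩
  rw [one_div_mul_eq_div, div_lt_one hs]
  linarith

theorem sub_mul_one_sub_eq {b1 d1 d2 b2 sh θ : ℝ} (hb1 : b1 ≠ 0) (hd2 : d2 ≠ 0) (hsh : sh ≠ 0)
    (hθ : θ = 1 / sh * (1 - d1 * b2 / (d2 * b1))) (x : ℝ) :
    d1 * b2 - d2 * b1 * (1 - sh * x) = d2 * b1 * sh * (x - θ) := by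
  subst hθ
  field_simp
  ring

theorem model_continuousOn_and_sign {b1 b2 d1 d2 K sh θ : ℝ} {f g : ℝ → ℝ}
    (hb1 : 0 < b1) (hb2 : 0 < b2) (hd2 : 0 < d2) (hK : 0 < K) (hsh0 : 0 < sh) (hsh1 : sh ≤ 1)
    (hf : ∀ p, f p = p * (1 - p) * (d1 * b2 - d2 * b1 * (1 - sh * p)) /
      (b1 * (1 - p) * (1 - sh * p) + b2 * p))
    (hg : ∀ p, g p = (1 / K) * (b1 * (1 - p) * (1 - sh * p)) /
      (b1 * (1 - p) * (1 - sh * p) + b2 * p))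
    (hθ : θ = 1 / sh * (1 - d1 * b2 / (d2 * b1))) (hθ1 : θ < 1) :
    ContinuousOn f (Icc 0 θ) ∧ ContinuousOn g (Icc 0 θ) ∧ f θ = 0 ∧
      ∀ x ∈ Icc 0 θ, f x ≤ 0 ∧ 0 < g x := by
  have hsel := sub_mul_one_sub_eq hb1.ne' hd2.ne' hsh0.ne' hθ
  have hpos : ∀ x ∈ Icc 0 θ, 0 < 1 - x ∧ 0 < 1 - sh * x := fun x hx ↦
    ⟨by linarith [hx.2], by nlinarith [hx.1, hx.2]⟩
  have hD : ∀ x ∈ Icc 0 θ, 0 < b1 * (1 - x) * (1 - sh * x) + b2 * x := fun x hx ↦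
    add_pos_of_pos_of_nonneg (mul_pos (mul_pos hb1 (hpos x hx).1) (hpos x hx).2)
      (mul_nonneg hb2.le hx.1)
  refine ⟨funext hf ▸ ContinuousOn.div (by fun_prop) (by fun_prop) fun x hx ↦ (hD x hx).ne',
    funext hg ▸ ContinuousOn.div (by fun_prop) (by fun_prop) fun x hx ↦ (hD x hx).ne',
    by simp [hf, hsel], fun x hx ↦ ⟨?_, ?_⟩⟩
  · rw [hf, hsel]
    refine div_nonpos_of_nonpos_of_nonneg (mul_nonpos_of_nonneg_of_nonpos
      (mul_nonneg hx.1 (hpos x hx).1.le) ?_) (hD x hx).le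
    exact mul_nonpos_of_nonneg_of_nonpos (by positivity) (sub_nonpos.2 hx.2)
  · rw [hg]
    exact div_pos (mul_pos (by positivity) (mul_pos (mul_pos hb1 (hpos x hx).1) (hpos x hx).2))
      (hD x hx)

theorem stmt_13_general
    (b1 b2 d1 d2 K sh : ℝ)
    (hb1 : 0 < b1) (hb2 : 0 < b2) (hd2 : 0 < d2)
    (hK : 0 < K) (hsh0 : 0 < sh) (hsh1 : sh ≤ 1)
    (hlow : 1 - sh < d1 * b2 / (d2 * b1)) (hhigh : d1 * b2 / (d2 * b1) < 1)
    (f g : ℝ → ℝ)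
    (hf : ∀ p, f p = p * (1 - p) * (d1 * b2 - d2 * b1 * (1 - sh * p)) /
      (b1 * (1 - p) * (1 - sh * p) + b2 * p))
    (hg : ∀ p, g p = (1 / K) * (b1 * (1 - p) * (1 - sh * p)) /
      (b1 * (1 - p) * (1 - sh * p) + b2 * p))
    (θ : ℝ) (hθ : θ = (1 / sh) * (1 - d1 * b2 / (d2 * b1)))
    (mstar : ℝ)
    (hmstar : IsGreatest ((fun p => -f p / g p) '' Set.Icc 0 θ) mstar)
    (M : ℝ) (hM : mstar < M)
    (Tstar : ℝ) (hTstar : Tstar = ∫ ν in (0:ℝ)..θ, (f ν + M * g ν)⁻¹)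
    (T : ℝ) (hT : Tstar ≤ T) :
    ∃ u p : ℝ → ℝ, IsTrajectory f g T M u p ∧ θ ≤ p T ∧
      ∀ v q : ℝ → ℝ, IsTrajectory f g T M v q → θ ≤ q T →
        (∫ t in (0:ℝ)..T, u t) ≤ ∫ t in (0:ℝ)..T, v t := by
  obtain ⟨hθ0, hθ1⟩ : θ ∈ Ioo 0 1 := hθ ▸ one_div_mul_one_sub_mem_Ioo hsh0 hlow hhigh
  obtain ⟨hfc, hgc, hfθ, hfg⟩ := model_continuousOn_and_sign hb1 hb2 hd2 hK hsh0 hsh1 hf hg hθ hθ1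
  have hG : ∀ x ∈ Icc 0 θ, 0 < f x + M * g x := fun x hx ↦ by
    have := (hmstar.2 (mem_image_of_mem _ hx)).trans_lt hM
    rw [div_lt_iff₀ (hfg x hx).2] at this
    linarith
  have hM0 : 0 ≤ M := by
    simpa [hf] using (hmstar.2 (mem_image_of_mem _ (left_mem_Icc.2 hθ0.le))).trans_lt hM |>.le
  have hTstar0 : 0 ≤ Tstar :=
    hTstar ▸ intervalIntegral.integral_nonneg hθ0.le fun x hx ↦ (inv_pos.2 (hG x hx)).le
  obtain ⟨u, p, hup, hpT, hcost⟩ :=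
    exists_bangBang_isTrajectory hθ0.le hfc hgc hfθ hG hM0 (hTstar ▸ hT)
  refine ⟨u, p, hup, hpT, fun v q hvq hqT ↦ ?_⟩
  rw [hcost]
  exact hvq.mul_integral_inv_le_integral (hTstar0.trans hT) hqT hθ0 hfc hgc
    (fun x hx ↦ (hfg x hx).1) hG

/-- existence for the fixed-horizon problem: for M > m* and T ≥ T*,
the set of admissible controls with p_u(T) ≥ θ is nonempty and the infimum of the cost
∫₀^T u over this set is attained. -/
theorem stmt_13
    (b1 b2 d1 d2 K sh : ℝ)
    (hb1 : 0 < b1) (hb2 : 0 < b2) (hd1 : 0 < d1) (hd2 : 0 < d2)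
    (hK : 0 < K) (hsh0 : 0 < sh) (hsh1 : sh ≤ 1)
    (hlow : 1 - sh < d1 * b2 / (d2 * b1)) (hhigh : d1 * b2 / (d2 * b1) < 1)
    (f g : ℝ → ℝ)
    (hf : ∀ p, f p = p * (1 - p) * (d1 * b2 - d2 * b1 * (1 - sh * p)) /
      (b1 * (1 - p) * (1 - sh * p) + b2 * p))
    (hg : ∀ p, g p = (1 / K) * (b1 * (1 - p) * (1 - sh * p)) /
      (b1 * (1 - p) * (1 - sh * p) + b2 * p))
    (θ : ℝ) (hθ : θ = (1 / sh) * (1 - d1 * b2 / (d2 * b1)))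
    (mstar : ℝ)
    (hmstar : IsGreatest ((fun p => -f p / g p) '' Set.Icc 0 θ) mstar)
    (M : ℝ) (hM : mstar < M)
    (Tstar : ℝ) (hTstar : Tstar = ∫ ν in (0:ℝ)..θ, (f ν + M * g ν)⁻¹)
    (T : ℝ) (hT : Tstar ≤ T) :
    ∃ u p : ℝ → ℝ, IsTrajectory f g T M u p ∧ θ ≤ p T ∧
      ∀ v q : ℝ → ℝ, IsTrajectory f g T M v q → θ ≤ q T →
        (∫ t in (0:ℝ)..T, u t) ≤ ∫ t in (0:ℝ)..T, v t :=
  stmt_13_general b1 b2 d1 d2 K sh hb1 hb2 hd2 hK hsh0 hsh1 hlow hhigh f g hf hg θ hθ mstar hmstar M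
    hM Tstar hTstar T hT
end
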